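/- arXiv:1911.12938 — 6 statements merged into one kernel-verified Lean document; each statement's English description precedes it below -/
import Mathlib

section
/- Let (G, τ, ⊕) be a topological gyrogroup and 𝒰 a neighborhood base of G at the identity 0. Then for every subset A of G, cl(A) = ⋂_{U ∈ 𝒰} (U ⊕ A). -/
universe u

/-- A gyrogroup: a set with a binary operation `+`, a (unique) two-sided identity `0`,
(unique) two-sided inverses `-x`, and gyroautomorphisms `gyr x y` satisfying the
left gyroassociative law and the left loop property. -/
class Gyrogroup (G : Type u) extends Add G, Zero G, Neg G where
  gyr : G → G → G → G
  zero_add : ∀ a : G, 0 + a = a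
  add_zero : ∀ a : G, a + 0 = a
  zero_unique : ∀ e : G, (∀ a : G, e + a = a ∧ a + e = a) → e = 0
  neg_add : ∀ a : G, -a + a = 0
  add_neg : ∀ a : G, a + -a = 0
  neg_unique : ∀ a b : G, (b + a = 0 ∧ a + b = 0) → b = -a
  gyr_bijective : ∀ x y : G, Function.Bijective (gyr x y)
  gyr_add : ∀ x y a b : G, gyr x y (a + b) = gyr x y a + gyr x y b
  add_gyroassoc : ∀ x y z : G, x + (y + z) = x + y + gyr x y z
  gyr_left_loop : ∀ x y : G, gyr (x + y) y = gyr x y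

open Gyrogroup

/-- A topological gyrogroup: a gyrogroup with a topology making `+` jointly
continuous and negation continuous. -/
class TopologicalGyrogroup (G : Type u) [TopologicalSpace G] [Gyrogroup G] : Prop where
  continuous_add : Continuous fun p : G × G => p.1 + p.2
  continuous_neg : Continuous fun x : G => -x

/-- `gadd A B = {a + b : a ∈ A, b ∈ B}`. -/
def gadd {G : Type u} [Gyrogroup G] (A B : Set G) : Set G := Set.image2 (· + ·) A B

/-- `gneg A = {-a : a ∈ A}`. -/
def gneg {G : Type u} [Gyrogroup G] (A : Set G) : Set G := (fun x : G => -x) '' A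

/-- A subgyrogroup: a nonempty subset closed under `+` and negation. -/
def IsSubgyrogroup {G : Type u} [Gyrogroup G] (H : Set G) : Prop :=
  H.Nonempty ∧ (∀ x ∈ H, -x ∈ H) ∧ ∀ x ∈ H, ∀ y ∈ H, x + y ∈ H

/-- An L-subgyrogroup: a subgyrogroup with `gyr a h '' H = H` for all `a ∈ G`, `h ∈ H`. -/
def IsLSubgyrogroup {G : Type u} [Gyrogroup G] (H : Set G) : Prop :=
  IsSubgyrogroup H ∧ ∀ a : G, ∀ h ∈ H, gyr a h '' H = H

section GyroLemmas

variable {G : Type u} [Gyrogroup G]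

lemma tg_add_left_cancel {a u v : G} (h : a + u = a + v) : u = v := by
  have h2 : -a + (a + u) = -a + (a + v) := by rw [h]
  rw [add_gyroassoc, add_gyroassoc, Gyrogroup.neg_add, Gyrogroup.zero_add,
    Gyrogroup.zero_add] at h2
  exact (gyr_bijective (-a) a).1 h2

lemma tg_gyr_zero_left (a z : G) : gyr (0 : G) a z = z := by
  have h := add_gyroassoc (0 : G) a z
  rw [Gyrogroup.zero_add, Gyrogroup.zero_add] at h
  exact (tg_add_left_cancel h).symm

lemma tg_gyr_neg_self (a z : G) : gyr (-a) a z = z := by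
  have h := congrFun (congrFun (congrArg gyr (Gyrogroup.neg_add a)).symm a) z
  -- h : gyr (-a + a) a z = gyr 0 a z  -- careful
  have h2 := gyr_left_loop (-a) a
  rw [Gyrogroup.neg_add] at h2
  rw [← h2]
  exact tg_gyr_zero_left a z

lemma tg_neg_add_cancel_left (a b : G) : -a + (a + b) = b := by
  rw [add_gyroassoc, Gyrogroup.neg_add, Gyrogroup.zero_add, tg_gyr_neg_self]

lemma tg_gyr_self_neg (a z : G) : gyr a (-a) z = z := by
  have h2 := gyr_left_loop a (-a)
  rw [Gyrogroup.add_neg] at h2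
  rw [← h2]
  exact tg_gyr_zero_left (-a) z

lemma tg_add_neg_cancel_left (a b : G) : a + (-a + b) = b := by
  rw [add_gyroassoc, Gyrogroup.add_neg, Gyrogroup.zero_add, tg_gyr_self_neg]

lemma tg_eq_neg_of_add {a x : G} (h : a + x = 0) : x = -a := by
  have := congrArg (fun w => -a + w) h
  rw [tg_neg_add_cancel_left, Gyrogroup.add_zero] at this
  exact this

lemma tg_neg_zero : -(0 : G) = 0 :=
  (tg_eq_neg_of_add (Gyrogroup.zero_add (0 : G))).symm

lemma tg_neg_neg (a : G) : -(-a) = a :=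
  (tg_eq_neg_of_add (Gyrogroup.neg_add a)).symm

lemma tg_gyr_self (a z : G) : gyr a a z = z := by
  have h2 := gyr_left_loop (0 : G) a
  rw [Gyrogroup.zero_add] at h2
  rw [h2]
  exact tg_gyr_zero_left a z

lemma tg_gyr_zero (a b : G) : gyr a b (0 : G) = 0 := by
  have h := gyr_add a b 0 0
  rw [Gyrogroup.zero_add] at h
  have h2 : gyr a b (0 : G) + 0 = gyr a b 0 + gyr a b 0 := by
    rw [Gyrogroup.add_zero]; exact h
  exact (tg_add_left_cancel h2).symm

lemma tg_gyr_neg (a b x : G) : gyr a b (-x) = -(gyr a b x) := by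
  apply tg_eq_neg_of_add
  rw [← gyr_add, Gyrogroup.add_neg, tg_gyr_zero]

lemma tg_inv_a (a b z : G) : gyr (-a) (a + b) (gyr a b z) = z := by
  have w1 : -a + ((a + b) + gyr a b z) = b + z := by
    rw [← add_gyroassoc, tg_neg_add_cancel_left]
  have w2 : -a + ((a + b) + gyr a b z) = b + gyr (-a) (a + b) (gyr a b z) := by
    rw [add_gyroassoc, tg_neg_add_cancel_left]
  exact tg_add_left_cancel (w2.symm.trans w1)

lemma tg_inv_a' (a b z : G) : gyr (-a) (a + b) (gyr a b z) = z := tg_inv_a a b z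

lemma tg_inv_b (a b w : G) : gyr a b (gyr (-a) (a + b) w) = w := by
  have h := tg_inv_a (-a) (a + b) w
  rw [tg_neg_neg, tg_neg_add_cancel_left] at h
  exact h

lemma tg_VI (b c z : G) : gyr b c z = gyr (-(b + c)) b z := by
  have hA : gyr (-(b + c)) b c = -(-(b + c) + b) := by
    apply tg_eq_neg_of_add
    rw [← add_gyroassoc, Gyrogroup.neg_add]
  have w1 : -(b + c) + (b + (c + z)) = gyr b c z := by
    rw [add_gyroassoc b c z, tg_neg_add_cancel_left]
  have w2 : -(b + c) + (b + (c + z)) = gyr (-(b + c)) b z := by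
    rw [add_gyroassoc (-(b + c)) b (c + z), gyr_add,
      add_gyroassoc (-(b + c) + b) (gyr (-(b + c)) b c) (gyr (-(b + c)) b z), hA,
      Gyrogroup.add_neg, Gyrogroup.zero_add, tg_gyr_self_neg]
  exact w1.symm.trans w2

lemma tg_even_inv_a (p q z : G) : gyr (-q) (-p) (gyr p q z) = z := by
  have h : gyr (-q) (-p) (gyr p q z) = gyr (-p) (p + q) (gyr p q z) := by
    have := tg_VI (-p) (p + q) (gyr p q z)
    rw [tg_neg_add_cancel_left] at this
    exact this.symm
  rw [h]; exact tg_inv_a p q z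

lemma tg_E' (p q z : G) : gyr q (-q + -p) z = gyr p q z := by
  have hσ : ∀ w : G, gyr q (-q + -p) (gyr (-q) (-p) w) = w := by
    intro w
    have h := tg_inv_b q (-q + -p) w
    rw [tg_add_neg_cancel_left] at h
    exact h
  calc gyr q (-q + -p) z
      = gyr q (-q + -p) (gyr (-q) (-p) (gyr p q z)) := by rw [tg_even_inv_a]
    _ = gyr p q z := hσ _

lemma tg_T' (p q z : G) : gyr (-p) (-q + -p) z = gyr p q z := by
  have h2 := gyr_left_loop q (-q + -p)
  rw [tg_add_neg_cancel_left] at h2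
  rw [← tg_E' p q z, ← h2]

lemma tg_gyr_form (x a : G) : gyr x a (-a) = -(x + a) + x := by
  have h : (x + a) + gyr x a (-a) = x := by
    rw [← add_gyroassoc, Gyrogroup.add_neg, Gyrogroup.add_zero]
  have := congrArg (fun w => -(x + a) + w) h
  rw [tg_neg_add_cancel_left] at this
  exact this

lemma tg_nested (s b z : G) : gyr s (gyr s b (-b)) (gyr s b z) = z := by
  rw [tg_gyr_form]
  have hT := tg_T' (-s) (s + b) (gyr s b z)
  rw [tg_neg_neg] at hT
  rw [hT]
  exact tg_inv_a s b z

lemma tg_right_cancel (a b : G) : (a + gyr a b (-b)) + b = a := by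
  have h1 : gyr a b (-b) + gyr a b b = 0 := by
    rw [← gyr_add, Gyrogroup.neg_add, tg_gyr_zero]
  have h2 : gyr a (gyr a b (-b)) (gyr a b b) = b := tg_nested a b b
  have w : a + (gyr a b (-b) + gyr a b b) = (a + gyr a b (-b)) + b := by
    rw [add_gyroassoc, h2]
  rw [h1, Gyrogroup.add_zero] at w
  exact w.symm

end GyroLemmas

theorem stmt8 {G : Type u} [TopologicalSpace G] [Gyrogroup G] [TopologicalGyrogroup G]
    (𝒰 : Set (Set G)) (hnbhd : ∀ U ∈ 𝒰, U ∈ nhds (0 : G))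
    (hbase : ∀ W ∈ nhds (0 : G), ∃ U ∈ 𝒰, U ⊆ W) (A : Set G) :
    closure A = ⋂ U ∈ 𝒰, gadd U A := by
  have ca : Continuous fun p : G × G => p.1 + p.2 := TopologicalGyrogroup.continuous_add
  have cn : Continuous fun y : G => -y := TopologicalGyrogroup.continuous_neg
  ext x
  simp only [Set.mem_iInter]
  constructor
  · intro hx U hU
    set φ : G → G := fun a => x + (-(x + a) + x) with hφdef
    have hφc : Continuous φ := by
      have c1 : Continuous fun a : G => x + a :=
        ca.comp (continuous_const.prodMk continuous_id)
      have c2 : Continuous fun a : G => -(x + a) := cn.comp c1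
      have c3 : Continuous fun a : G => -(x + a) + x :=
        ca.comp (c2.prodMk continuous_const)
      exact ca.comp (continuous_const.prodMk c3)
    have hφeq : ∀ a : G, φ a = x + gyr x a (-a) := by
      intro a; rw [tg_gyr_form]
    have hφx : φ x = 0 := by
      rw [hφeq x, tg_gyr_self, Gyrogroup.add_neg]
    have hmem : φ ⁻¹' U ∈ nhds x := by
      apply hφc.continuousAt.preimage_mem_nhds
      rw [hφx]; exact hnbhd U hU
    rcases mem_closure_iff_nhds.mp hx _ hmem with ⟨a, haW, haA⟩
    refine Set.mem_image2.mpr ⟨φ a, haW, a, haA, ?_⟩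
    rw [hφeq a]
    exact tg_right_cancel x a
  · intro hx
    rw [mem_closure_iff_nhds]
    intro t ht
    set ψ : G → G := fun u => -u + x with hψdef
    have hψc : Continuous ψ :=
      ca.comp (cn.prodMk continuous_const)
    have hψ0 : ψ 0 = x := by
      show -(0:G) + x = x
      rw [tg_neg_zero, Gyrogroup.zero_add]
    have hmem : ψ ⁻¹' t ∈ nhds (0 : G) := by
      apply hψc.continuousAt.preimage_mem_nhds
      rw [hψ0]; exact ht
    rcases hbase _ hmem with ⟨U, hU, hUsub⟩
    rcases Set.mem_image2.mp (hx U hU) with ⟨u, hu, a, ha, hua⟩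
    refine ⟨a, ?_, ha⟩
    have : ψ u = a := by
      show -u + x = a
      rw [← hua, tg_neg_add_cancel_left]
    rw [← this]
    exact hUsub hu
end

section
/- The complex open unit disk D = {z ∈ ℂ : |z| < 1} with Möbius addition a ⊕ b = (a + b)/(1 + conj(a)·b) is a gyrogroup, with gyr[a,b](c) = ((1 + a·conj(b))/(1 + conj(a)·b))·c, which is not a group (the operation is not associative). -/
universe u

open Gyrogroup

/-!
Write `a ⊕ b = (a + b) / (1 + conj a * b)` and `g(a, b) = (1 + a * conj b) / (1 + conj a * b)`.
The identity `|1 + conj a * b|² - |a + b|² = (1 - |a|²)(1 - |b|²)` shows that `⊕` preserves the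
disk and never divides by zero there, while `g(a, b)` is a quotient of two conjugate numbers,
hence of modulus one, so multiplication by it is a bijection of the disk commuting with `⊕`.
Both `x ⊕ (y ⊕ z)` and `(x ⊕ y) ⊕ g(x, y) z` reduce to the expression
`(x + y + z + x conj(y) z) / (1 + conj(x) y + conj(x) z + conj(y) z)`, which is gyroassociativity,
and `g(x ⊕ y, y)` has numerator and denominator `K / (1 + conj x * y)` and `K / (1 + x * conj y)`
for the same `K`, which is the left loop property. Associativity fails already at
`(1/2, i/2, 1/2)`.
-/

open ComplexConjugate

local notation "𝔻" => {z : ℂ // ‖z‖ < 1}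

noncomputable def mobiusAdd (a b : ℂ) : ℂ := (a + b) / (1 + conj a * b)

noncomputable def gyrFactor (a b : ℂ) : ℂ := (1 + a * conj b) / (1 + conj a * b)

lemma one_add_conj_mul_ne_zero_swap {a b : ℂ} (h : 1 + conj a * b ≠ 0) :
    1 + conj b * a ≠ 0 := by
  contrapose! h
  simpa [mul_comm] using congrArg conj h

lemma conj_gyrFactor (a b : ℂ) : conj (gyrFactor a b) = gyrFactor b a := by
  simp [gyrFactor, mul_comm]

lemma mobiusAdd_mul_left {u : ℂ} (hu : conj u * u = 1) (a b : ℂ) :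
    mobiusAdd (u * a) (u * b) = u * mobiusAdd a b := by
  have hden : conj (u * a) * (u * b) = conj a * b := by
    rw [map_mul, mul_mul_mul_comm, hu, one_mul]
  rw [mobiusAdd, mobiusAdd, hden, ← mul_add, mul_div_assoc]

lemma mobiusAdd_eq_zero_iff {a b : ℂ} (h : 1 + conj a * b ≠ 0) :
    mobiusAdd a b = 0 ↔ a + b = 0 := by
  simp [mobiusAdd, h]

lemma mobiusAdd_mobiusAdd {x y z : ℂ} (h : 1 + conj y * z ≠ 0) :
    mobiusAdd x (mobiusAdd y z)
      = (x + y + z + x * conj y * z) / (1 + conj x * y + conj x * z + conj y * z) := by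
  rw [mobiusAdd, mobiusAdd, add_div' _ _ _ h, mul_div_assoc', add_div' _ _ _ h,
    div_div_div_cancel_right₀ h]
  congr 1 <;> ring

lemma mobiusAdd_mobiusAdd_gyrFactor_mul {x y z : ℂ} (h : 1 + conj x * y ≠ 0) :
    mobiusAdd (mobiusAdd x y) (gyrFactor x y * z)
      = (x + y + z + x * conj y * z) / (1 + conj x * y + conj x * z + conj y * z) := by
  have hconj : conj (mobiusAdd x y) * (gyrFactor x y * z)
      = (conj x + conj y) * z / (1 + conj x * y) := by
    have h' := one_add_conj_mul_ne_zero_swap h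
    simp only [mobiusAdd, gyrFactor, map_div₀, map_add, map_mul, map_one, Complex.conj_conj]
    field_simp
  rw [mobiusAdd, hconj, mobiusAdd, gyrFactor, div_mul_eq_mul_div, ← add_div, add_div' _ _ _ h,
    div_div_div_cancel_right₀ h]
  congr 1 <;> ring

lemma sq_norm_one_add_conj_mul_sub_sq_norm_add (a b : ℂ) :
    ‖1 + conj a * b‖ ^ 2 - ‖a + b‖ ^ 2 = (1 - ‖a‖ ^ 2) * (1 - ‖b‖ ^ 2) := by
  simp only [Complex.sq_norm, Complex.normSq_apply, Complex.add_re, Complex.add_im,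
    Complex.mul_re, Complex.mul_im, Complex.one_re, Complex.one_im, Complex.conj_re,
    Complex.conj_im]
  ring

section Disk

variable {a b : ℂ}

lemma norm_add_lt_norm_one_add_conj_mul (ha : ‖a‖ < 1) (hb : ‖b‖ < 1) :
    ‖a + b‖ < ‖1 + conj a * b‖ := by
  have hprod : 0 < (1 - ‖a‖ ^ 2) * (1 - ‖b‖ ^ 2) := by
    apply mul_pos <;> nlinarith [norm_nonneg a, norm_nonneg b]
  have := sq_norm_one_add_conj_mul_sub_sq_norm_add a b
  exact (pow_lt_pow_iff_left₀ (norm_nonneg _) (norm_nonneg _) two_ne_zero).mp (by linarith)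

lemma one_add_conj_mul_ne_zero (ha : ‖a‖ < 1) (hb : ‖b‖ < 1) : 1 + conj a * b ≠ 0 :=
  norm_pos_iff.mp ((norm_nonneg _).trans_lt (norm_add_lt_norm_one_add_conj_mul ha hb))

lemma norm_mobiusAdd_lt_one (ha : ‖a‖ < 1) (hb : ‖b‖ < 1) : ‖mobiusAdd a b‖ < 1 := by
  rw [mobiusAdd, norm_div, div_lt_one (norm_pos_iff.mpr (one_add_conj_mul_ne_zero ha hb))]
  exact norm_add_lt_norm_one_add_conj_mul ha hb

lemma norm_gyrFactor (ha : ‖a‖ < 1) (hb : ‖b‖ < 1) : ‖gyrFactor a b‖ = 1 := by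
  have hnum : 1 + a * conj b = conj (1 + conj a * b) := by simp
  rw [gyrFactor, norm_div, hnum, Complex.norm_conj,
    div_self (norm_ne_zero_iff.mpr (one_add_conj_mul_ne_zero ha hb))]

lemma gyrFactor_swap_mul (ha : ‖a‖ < 1) (hb : ‖b‖ < 1) : gyrFactor b a * gyrFactor a b = 1 := by
  rw [← conj_gyrFactor, Complex.conj_mul', norm_gyrFactor ha hb, Complex.ofReal_one, one_pow]

lemma gyrFactor_mobiusAdd_left (ha : ‖a‖ < 1) (hb : ‖b‖ < 1) :
    gyrFactor (mobiusAdd a b) b = gyrFactor a b := by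
  have h := one_add_conj_mul_ne_zero ha hb
  have h' := one_add_conj_mul_ne_zero_swap h
  set K := 1 + conj a * b + conj b * a + conj b * b
  have hnum : 1 + mobiusAdd a b * conj b = K / (1 + conj a * b) := by
    rw [mobiusAdd, div_mul_eq_mul_div, add_div' _ _ _ h]
    ring
  have hden : 1 + conj (mobiusAdd a b) * b = K / (1 + conj b * a) := by
    rw [mobiusAdd, map_div₀, map_add, map_add, map_mul, map_one, Complex.conj_conj,
      div_mul_eq_mul_div, add_div' _ _ _ (by rwa [mul_comm] at h')]
    ring
  have hK : K ≠ 0 := by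
    intro hK
    apply one_add_conj_mul_ne_zero (norm_mobiusAdd_lt_one ha hb) hb
    rw [hden, hK, zero_div]
  rw [gyrFactor, gyrFactor, hnum, hden, div_div_div_cancel_left' _ _ hK]
  ring

end Disk

noncomputable instance mobiusGyrogroup : Gyrogroup 𝔻 where
  add a b := ⟨mobiusAdd a b, norm_mobiusAdd_lt_one a.2 b.2⟩
  zero := ⟨0, by simp⟩
  neg a := ⟨-a, by simpa using a.2⟩
  gyr a b c := ⟨gyrFactor a b * c, by simpa [norm_gyrFactor a.2 b.2] using c.2⟩
  zero_add a := Subtype.ext (show mobiusAdd 0 a = a by simp [mobiusAdd])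
  add_zero a := Subtype.ext (show mobiusAdd a 0 = a by simp [mobiusAdd])
  zero_unique e h := Subtype.ext <| show (e : ℂ) = 0 by
    have h0 : mobiusAdd e 0 = 0 := congrArg Subtype.val (h ⟨0, by simp⟩).1
    simpa [mobiusAdd] using h0
  neg_add a := Subtype.ext (show mobiusAdd (-a) a = 0 by simp [mobiusAdd])
  add_neg a := Subtype.ext (show mobiusAdd a (-a) = 0 by simp [mobiusAdd])
  neg_unique a b h := Subtype.ext <| eq_neg_of_add_eq_zero_left <|
    (mobiusAdd_eq_zero_iff (one_add_conj_mul_ne_zero b.2 a.2)).mp (congrArg Subtype.val h.1)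
  gyr_bijective a b := by
    refine Function.bijective_iff_has_inverse.mpr ⟨fun c => ⟨gyrFactor b a * c, ?_⟩, ?_, ?_⟩
    · simpa [norm_gyrFactor b.2 a.2] using c.2
    · intro c
      exact Subtype.ext (by simp [← mul_assoc, gyrFactor_swap_mul a.2 b.2])
    · intro c
      exact Subtype.ext (by simp [← mul_assoc, gyrFactor_swap_mul b.2 a.2])
  gyr_add a b c d := Subtype.ext <| (mobiusAdd_mul_left (u := gyrFactor a b)
    (by rw [conj_gyrFactor, gyrFactor_swap_mul a.2 b.2]) c d).symm
  add_gyroassoc x y z := Subtype.ext <| by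
    change mobiusAdd x (mobiusAdd y z) = mobiusAdd (mobiusAdd x y) (gyrFactor x y * z)
    rw [mobiusAdd_mobiusAdd (one_add_conj_mul_ne_zero y.2 z.2),
      mobiusAdd_mobiusAdd_gyrFactor_mul (one_add_conj_mul_ne_zero x.2 y.2)]
  gyr_left_loop x y := funext fun c => Subtype.ext <|
    congrArg (· * (c : ℂ)) (gyrFactor_mobiusAdd_left x.2 y.2)

lemma mobiusAdd_not_assoc :
    mobiusAdd (mobiusAdd (1 / 2) (Complex.I / 2)) (1 / 2)
      ≠ mobiusAdd (1 / 2) (mobiusAdd (Complex.I / 2) (1 / 2)) := by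
  norm_num [mobiusAdd, Complex.ext_iff, Complex.div_re, Complex.div_im, Complex.normSq_apply]

lemma mobiusGyrogroup_not_assoc : ¬ ∀ a b c : 𝔻, a + b + c = a + (b + c) := by
  intro h
  have hhalf : ‖(1 / 2 : ℂ)‖ < 1 := by norm_num
  have hI : ‖Complex.I / 2‖ < 1 := by norm_num
  exact mobiusAdd_not_assoc (congrArg Subtype.val (h ⟨1 / 2, hhalf⟩ ⟨Complex.I / 2, hI⟩ ⟨1 / 2, hhalf⟩))

theorem stmt12 :
    ∃ inst : Gyrogroup {z : ℂ // ‖z‖ < 1},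
      (∀ a b : {z : ℂ // ‖z‖ < 1},
        ((@HAdd.hAdd _ _ _ (@instHAdd _ inst.toAdd) a b : {z : ℂ // ‖z‖ < 1}) : ℂ)
          = ((a : ℂ) + (b : ℂ)) / (1 + (starRingEnd ℂ) (a : ℂ) * (b : ℂ))) ∧
      (∀ a b c : {z : ℂ // ‖z‖ < 1},
        ((inst.gyr a b c : {z : ℂ // ‖z‖ < 1}) : ℂ)
          = ((1 + (a : ℂ) * (starRingEnd ℂ) (b : ℂ)) / (1 + (starRingEnd ℂ) (a : ℂ) * (b : ℂ)))
              * (c : ℂ)) ∧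
      ¬ (∀ a b c : {z : ℂ // ‖z‖ < 1},
          @HAdd.hAdd _ _ _ (@instHAdd _ inst.toAdd)
              (@HAdd.hAdd _ _ _ (@instHAdd _ inst.toAdd) a b) c
            = @HAdd.hAdd _ _ _ (@instHAdd _ inst.toAdd) a
                (@HAdd.hAdd _ _ _ (@instHAdd _ inst.toAdd) b c)) := by
  exact ⟨mobiusGyrogroup, fun _ _ => rfl, fun _ _ _ => rfl, mobiusGyrogroup_not_assoc⟩
end

section
/- Let (G, τ, ⊕) be a topological gyrogroup and H an L-subgyrogroup of G. Then the natural map φ : G → G/H, a ↦ a ⊕ H, is open and continuous when G/H carries the quotient topology τ(G/H) = {O ⊆ G/H : φ⁻¹(O) ∈ τ}. -/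
universe u

open Gyrogroup

section Aux
variable {G : Type u} [Gyrogroup G]

lemma gyr_inj (x y : G) : Function.Injective (gyr x y) := (Gyrogroup.gyr_bijective x y).1

lemma left_inj (a : G) {x y : G} (h : a + x = a + y) : x = y := by
  have h2 : -a + (a + x) = -a + (a + y) := by rw [h]
  rw [Gyrogroup.add_gyroassoc, Gyrogroup.add_gyroassoc, Gyrogroup.neg_add,
    Gyrogroup.zero_add, Gyrogroup.zero_add] at h2
  exact gyr_inj _ _ h2

lemma gyr_zero_left (a c : G) : gyr (0 : G) a c = c := by
  have := Gyrogroup.add_gyroassoc (0 : G) a c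
  rw [Gyrogroup.zero_add, Gyrogroup.zero_add] at this
  exact (left_inj a this).symm

lemma gyr_neg_self (a c : G) : gyr (-a) a c = c := by
  have := Gyrogroup.gyr_left_loop (-a) a
  rw [Gyrogroup.neg_add] at this
  rw [← this, gyr_zero_left]

lemma gyro_neg_add_cancel_left (a x : G) : -a + (a + x) = x := by
  rw [Gyrogroup.add_gyroassoc, Gyrogroup.neg_add, Gyrogroup.zero_add, gyr_neg_self]

lemma gyr_self_neg (a c : G) : gyr a (-a) c = c := by
  have := Gyrogroup.gyr_left_loop a (-a)
  rw [Gyrogroup.add_neg] at this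
  rw [← this, gyr_zero_left]

lemma gyro_add_neg_cancel_left (a x : G) : a + (-a + x) = x := by
  rw [Gyrogroup.add_gyroassoc, Gyrogroup.add_neg, Gyrogroup.zero_add, gyr_self_neg]

lemma coset_eq {H : Set G} (hH : IsLSubgyrogroup H) (a : G) {h : G} (hh : h ∈ H) :
    (fun k => (a + h) + k) '' H = (fun k => a + k) '' H := by
  obtain ⟨⟨hne, hneg, hadd⟩, hL⟩ := hH
  ext x
  constructor
  · rintro ⟨k, hk, rfl⟩
    have hk' : k ∈ gyr a h '' H := by rw [hL a h hh]; exact hk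
    obtain ⟨m, hm, rfl⟩ := hk'
    exact ⟨h + m, hadd h hh m hm, Gyrogroup.add_gyroassoc a h m⟩
  · rintro ⟨m, hm, rfl⟩
    refine ⟨gyr a h (-h + m), ?_, ?_⟩
    · rw [← hL a h hh]
      exact ⟨-h + m, hadd _ (hneg h hh) m hm, rfl⟩
    · show (a + h) + gyr a h (-h + m) = a + m
      rw [← Gyrogroup.add_gyroassoc, gyro_add_neg_cancel_left]

lemma zero_mem {H : Set G} (hH : IsSubgyrogroup H) : (0 : G) ∈ H := by
  obtain ⟨⟨x, hx⟩, hneg, hadd⟩ := hH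
  have := hadd x hx (-x) (hneg x hx)
  rwa [Gyrogroup.add_neg] at this

end Aux

theorem stmt13 {G : Type u} [TopologicalSpace G] [Gyrogroup G] [TopologicalGyrogroup G]
    (H : Set G) (hH : IsLSubgyrogroup H) :
    Continuous (Quotient.mk (Setoid.ker fun a : G => (fun h => a + h) '' H)) ∧
    IsOpenMap (Quotient.mk (Setoid.ker fun a : G => (fun h => a + h) '' H)) := by
  set f : G → Set G := fun a : G => (fun h => a + h) '' H with hf
  set s : Setoid G := Setoid.ker f with hs
  have hcont : Continuous (Quotient.mk s) := continuous_quotient_mk'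
  refine ⟨hcont, ?_⟩
  intro U hU
  have key : Quotient.mk s ⁻¹' (Quotient.mk s '' U) = ⋃ h ∈ H, (fun a : G => a + h) ⁻¹' U := by
    ext x
    simp only [Set.mem_preimage, Set.mem_image, Set.mem_iUnion]
    constructor
    · rintro ⟨u, hu, heq⟩
      have hfe : f u = f x := Quotient.exact heq
      have h0 : u ∈ f u := ⟨0, zero_mem hH.1, Gyrogroup.add_zero u⟩
      rw [hfe] at h0
      obtain ⟨h, hh, hxh⟩ := h0
      exact ⟨h, hh, by rw [show (x + h : G) = u from hxh]; exact hu⟩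
    · rintro ⟨h, hh, hxu⟩
      refine ⟨x + h, hxu, ?_⟩
      apply Quotient.sound
      show f (x + h) = f x
      exact coset_eq hH x hh
  have hop : IsOpen (Quotient.mk s ⁻¹' (Quotient.mk s '' U)) := by
    rw [key]
    exact isOpen_biUnion fun h _ =>
      (TopologicalGyrogroup.continuous_add.comp
        (continuous_id.prodMk continuous_const)).isOpen_preimage U hU
  exact isQuotientMap_quotient_mk'.isOpen_preimage.mp hop
end

section
/- Let G be a strongly topological gyrogroup with symmetric neighborhood base 𝒰 at 0, and suppose {U_n : n ∈ ω} ⊆ 𝒰 satisfies U_{n+1} ⊕ U_{n+1} ⊆ U_n for all n. Then there exists a continuous prenorm N on G (i.e., N(0) = 0, N(x ⊕ y) ≤ N(x) + N(y), N(⊖x) = N(x)) such that N(gyr[x,y](z)) = N(z) for all x, y, z ∈ G, and {x ∈ G : N(x) < 1/2ⁿ} ⊆ U_n ⊆ {x ∈ G : N(x) ≤ 2/2ⁿ} for all n ∈ ω. -/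
universe u

open Gyrogroup

/-!
Birkhoff–Kakutani construction. Dyadic sums of the `U n` give sets `V (k / 2 ^ n)` with
`V (r) ⊕ U n ⊆ V (r + 1 / 2 ^ n)`; re-bracketing these sums is possible because the `U n` are
`gyr`-invariant. The gauge `f u = inf {r | u ∈ V (r)}` then moves by at most `2 / 2 ^ n` under
right translation by `U n`, and `f u < 1 / 2 ^ m` forces `u ∈ U m`.
The prenorm is `N x = sup |f (v ⊕ Φ x) - f v|` over base points `v` and additive maps `Φ`
preserving every `U n`. This family of maps contains the gyroautomorphisms and their inverses and
is closed under composition, so `v ⊕ Φ (x ⊕ y) = (v ⊕ Φ x) ⊕ gyr[v, Φ x] (Φ y)` gives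
subadditivity, and symmetry and `gyr`-invariance follow similarly. A subadditive function that is
small near `0` is continuous.
-/

namespace Gyrogroup

variable {G : Type u} [Gyrogroup G]

theorem add_left_cancel (a : G) {b c : G} (h : a + b = a + c) : b = c := by
  have h' : -a + (a + b) = -a + (a + c) := by rw [h]
  rw [Gyrogroup.add_gyroassoc, Gyrogroup.add_gyroassoc, Gyrogroup.neg_add,
    Gyrogroup.zero_add, Gyrogroup.zero_add] at h'
  exact (Gyrogroup.gyr_bijective (-a) a).injective h'

theorem gyr_zero_left (a z : G) : gyr 0 a z = z := by
  have h := Gyrogroup.add_gyroassoc (0 : G) a z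
  rw [Gyrogroup.zero_add, Gyrogroup.zero_add] at h
  exact (Gyrogroup.add_left_cancel a h).symm

theorem gyr_neg_self (a z : G) : gyr (-a) a z = z := by
  rw [← Gyrogroup.gyr_left_loop, Gyrogroup.neg_add, gyr_zero_left]

theorem neg_add_cancel_left (a b : G) : -a + (a + b) = b := by
  rw [Gyrogroup.add_gyroassoc, Gyrogroup.neg_add, Gyrogroup.zero_add, gyr_neg_self]

theorem neg_neg (a : G) : -(-a) = a :=
  (Gyrogroup.neg_unique (-a) a ⟨Gyrogroup.add_neg a, Gyrogroup.neg_add a⟩).symm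

theorem add_neg_cancel_left (a b : G) : a + (-a + b) = b := by
  simpa only [Gyrogroup.neg_neg] using Gyrogroup.neg_add_cancel_left (-a) b

theorem eq_neg_of_add_eq_zero {a b : G} (h : a + b = 0) : b = -a := by
  simpa only [h, Gyrogroup.add_zero] using (Gyrogroup.neg_add_cancel_left a b).symm

theorem add_add_gyr_neg (u z : G) : u + z + gyr u z (-z) = u := by
  rw [← Gyrogroup.add_gyroassoc, Gyrogroup.add_neg, Gyrogroup.add_zero]

theorem map_zero_of_map_add {Φ : G → G} (hΦ : ∀ u v, Φ (u + v) = Φ u + Φ v) :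
    Φ 0 = 0 := by
  refine Gyrogroup.add_left_cancel (Φ 0) ?_
  rw [← hΦ, Gyrogroup.add_zero, Gyrogroup.add_zero]

theorem map_neg_of_map_add {Φ : G → G} (hΦ : ∀ u v, Φ (u + v) = Φ u + Φ v) (a : G) :
    Φ (-a) = -Φ a :=
  Gyrogroup.eq_neg_of_add_eq_zero (by rw [← hΦ, Gyrogroup.add_neg, map_zero_of_map_add hΦ])

end Gyrogroup

section SetArithmetic

variable {G : Type u} [Gyrogroup G]

theorem mem_gadd {A B : Set G} {a b : G} (ha : a ∈ A) (hb : b ∈ B) : a + b ∈ gadd A B :=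
  Set.mem_image2_of_mem ha hb

theorem gadd_zero_left (A : Set G) : gadd {0} A = A := by
  simp [gadd, Gyrogroup.zero_add]

theorem gadd_subset_gadd_left {A B B' : Set G} (h : B ⊆ B') : gadd A B ⊆ gadd A B' :=
  Set.image2_subset_left h

theorem gadd_gadd_subset {C : Set G} (hC : ∀ x y : G, C ⊆ gyr x y '' C) (A B : Set G) :
    gadd (gadd A B) C ⊆ gadd A (gadd B C) := by
  rintro _ ⟨_, ⟨a, ha, b, hb, rfl⟩, c, hc, rfl⟩
  obtain ⟨c', hc', rfl⟩ := hC a b hc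
  show a + b + gyr a b c' ∈ _
  rw [← Gyrogroup.add_gyroassoc]
  exact mem_gadd ha (mem_gadd hb hc')

end SetArithmetic

namespace BirkhoffKakutani

variable {G : Type u} [Gyrogroup G] {U : ℕ → Set G}

/-- The set `V (k / 2 ^ n)` of the Birkhoff–Kakutani construction: for
`k = ∑ i ≤ n, bᵢ 2 ^ (n - i)` with binary digits `bᵢ`, it is
`(⋯ (b₀U₀ ⊕ b₁U₁) ⊕ ⋯) ⊕ bₙUₙ`, the summands with `bᵢ = 0` omitted. -/
def dyadicSet (U : ℕ → Set G) : ℕ → ℕ → Set G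
  | 0, k => if k = 0 then {0} else U 0
  | n + 1, k =>
    if k % 2 = 0 then dyadicSet U n (k / 2) else gadd (dyadicSet U n (k / 2)) (U (n + 1))

theorem dyadicSet_zero_right (U : ℕ → Set G) (n : ℕ) : dyadicSet U n 0 = {0} := by
  induction n with
  | zero => simp [dyadicSet]
  | succ n ih => simp [dyadicSet, ih]

theorem dyadicSet_two_mul (U : ℕ → Set G) (n k : ℕ) :
    dyadicSet U (n + 1) (2 * k) = dyadicSet U n k := by
  simp [dyadicSet]

theorem dyadicSet_two_mul_add_one (U : ℕ → Set G) (n k : ℕ) :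
    dyadicSet U (n + 1) (2 * k + 1) = gadd (dyadicSet U n k) (U (n + 1)) := by
  simp [dyadicSet, Nat.add_mod, Nat.add_div_of_dvd_right]

theorem dyadicSet_one (U : ℕ → Set G) (n : ℕ) : dyadicSet U n 1 = U n := by
  cases n with
  | zero => simp [dyadicSet]
  | succ n => simpa [dyadicSet_zero_right, gadd_zero_left] using dyadicSet_two_mul_add_one U n 0

theorem dyadicSet_mul_two_pow (U : ℕ → Set G) (n k p : ℕ) :
    dyadicSet U (n + p) (k * 2 ^ p) = dyadicSet U n k := by
  induction p with
  | zero => simp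
  | succ p ih => rw [← add_assoc, pow_succ, ← mul_assoc, mul_comm _ 2, dyadicSet_two_mul, ih]

theorem dyadicSet_two_pow_sub (U : ℕ → Set G) {m n : ℕ} (hmn : m ≤ n) :
    dyadicSet U n (2 ^ (n - m)) = U m := by
  obtain ⟨p, rfl⟩ := Nat.exists_eq_add_of_le hmn
  simpa [dyadicSet_one] using dyadicSet_mul_two_pow U m 1 p

theorem gadd_dyadicSet_subset (hsub : ∀ n, gadd (U (n + 1)) (U (n + 1)) ⊆ U n)
    (hgyr : ∀ n x y, gyr x y '' U n = U n) :
    ∀ {n k : ℕ}, k + 1 ≤ 2 ^ n → gadd (dyadicSet U n k) (U n) ⊆ dyadicSet U n (k + 1)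
  | 0, k, hk => by
    obtain rfl : k = 0 := by simpa using hk
    rw [dyadicSet_zero_right, gadd_zero_left, dyadicSet_one]
  | n + 1, k, hk => by
    obtain ⟨j, rfl | rfl⟩ := Nat.even_or_odd' k
    · rw [dyadicSet_two_mul, dyadicSet_two_mul_add_one]
    · rw [dyadicSet_two_mul_add_one, show 2 * j + 1 + 1 = 2 * (j + 1) by ring, dyadicSet_two_mul]
      calc gadd (gadd (dyadicSet U n j) (U (n + 1))) (U (n + 1))
          ⊆ gadd (dyadicSet U n j) (gadd (U (n + 1)) (U (n + 1))) :=
            gadd_gadd_subset (fun x y => (hgyr (n + 1) x y).ge) _ _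
        _ ⊆ gadd (dyadicSet U n j) (U n) := gadd_subset_gadd_left (hsub n)
        _ ⊆ dyadicSet U n (j + 1) :=
            gadd_dyadicSet_subset hsub hgyr (by rw [pow_succ] at hk; omega)

theorem dyadicSet_mono (hzero : ∀ n, (0 : G) ∈ U n)
    (hsub : ∀ n, gadd (U (n + 1)) (U (n + 1)) ⊆ U n) (hgyr : ∀ n x y, gyr x y '' U n = U n)
    {n k l : ℕ} (hkl : k ≤ l) (hl : l ≤ 2 ^ n) : dyadicSet U n k ⊆ dyadicSet U n l := by
  induction l, hkl using Nat.le_induction with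
  | base => rfl
  | succ l hkl ih =>
    intro x hx
    have hx' := gadd_dyadicSet_subset hsub hgyr hl (mem_gadd (ih (by omega) hx) (hzero n))
    rwa [Gyrogroup.add_zero] at hx'

theorem exists_dyadicSet_coarse (hzero : ∀ n, (0 : G) ∈ U n)
    (hsub : ∀ n, gadd (U (n + 1)) (U (n + 1)) ⊆ U n) (hgyr : ∀ n x y, gyr x y '' U n = U n)
    {u : G} {m k : ℕ} (hu : u ∈ dyadicSet U m k) (hk : k ≤ 2 ^ m) (n : ℕ) :
    ∃ q ≤ 2 ^ n, u ∈ dyadicSet U n q ∧ q * 2 ^ m ≤ k * 2 ^ n + 2 ^ m := by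
  set q := min (k * 2 ^ n / 2 ^ m + 1) (2 ^ n) with hq_def
  have hq_ge : k * 2 ^ n ≤ q * 2 ^ m := by
    rcases min_choice (k * 2 ^ n / 2 ^ m + 1) (2 ^ n) with h | h <;> rw [hq_def, h]
    · exact (Nat.lt_div_mul_add (Nat.two_pow_pos m)).le.trans (by rw [add_mul, one_mul])
    · exact Nat.mul_le_mul_right _ hk |>.trans_eq (mul_comm _ _)
  have hq_le : q * 2 ^ m ≤ k * 2 ^ n + 2 ^ m :=
    calc q * 2 ^ m ≤ (k * 2 ^ n / 2 ^ m + 1) * 2 ^ m := Nat.mul_le_mul_right _ (min_le_left _ _)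
      _ ≤ k * 2 ^ n + 2 ^ m := by
        rw [add_mul, one_mul]
        exact Nat.add_le_add_right (Nat.div_mul_le_self _ _) _
  refine ⟨q, min_le_right _ _, ?_, hq_le⟩
  rw [← dyadicSet_mul_two_pow U n q m, add_comm]
  rw [← dyadicSet_mul_two_pow U m k n] at hu
  refine dyadicSet_mono hzero hsub hgyr hq_ge ?_ hu
  rw [pow_add, mul_comm (2 ^ m)]
  exact Nat.mul_le_mul_right _ (min_le_right _ _)

-- The extra `1` makes `dyadicGauge U u = 1`, rather than `sInf ∅ = 0`, for `u ∉ U 0`.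
def dyadicBounds (U : ℕ → Set G) (u : G) : Set ℝ :=
  insert 1 {r | ∃ n k : ℕ, k ≤ 2 ^ n ∧ u ∈ dyadicSet U n k ∧ r = k / 2 ^ n}

noncomputable def dyadicGauge (U : ℕ → Set G) (u : G) : ℝ := sInf (dyadicBounds U u)

theorem dyadicBounds_nonneg {u : G} {r : ℝ} (hr : r ∈ dyadicBounds U u) : 0 ≤ r := by
  obtain rfl | ⟨n, k, -, -, rfl⟩ := hr <;> positivity

theorem dyadicGauge_nonneg (U : ℕ → Set G) (u : G) : 0 ≤ dyadicGauge U u :=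
  le_csInf ⟨1, Set.mem_insert _ _⟩ fun _ => dyadicBounds_nonneg

theorem dyadicGauge_le_one (U : ℕ → Set G) (u : G) : dyadicGauge U u ≤ 1 :=
  csInf_le ⟨0, fun _ => dyadicBounds_nonneg⟩ (Set.mem_insert _ _)

theorem dyadicGauge_le_of_mem {u : G} {n k : ℕ} (hk : k ≤ 2 ^ n) (hu : u ∈ dyadicSet U n k) :
    dyadicGauge U u ≤ k / 2 ^ n :=
  csInf_le ⟨0, fun _ => dyadicBounds_nonneg⟩ (Set.mem_insert_of_mem _ ⟨n, k, hk, hu, rfl⟩)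

theorem dyadicGauge_zero (U : ℕ → Set G) : dyadicGauge U 0 = 0 := by
  refine le_antisymm ?_ (dyadicGauge_nonneg U 0)
  simpa using dyadicGauge_le_of_mem (U := U) (n := 0) (k := 0) (by simp) (by simp [dyadicSet])

theorem mem_of_dyadicGauge_lt (hzero : ∀ n, (0 : G) ∈ U n)
    (hsub : ∀ n, gadd (U (n + 1)) (U (n + 1)) ⊆ U n) (hgyr : ∀ n x y, gyr x y '' U n = U n)
    {u : G} {m : ℕ} (h : dyadicGauge U u < 1 / 2 ^ m) : u ∈ U m := by
  obtain ⟨r, hr, hrm⟩ := exists_lt_of_csInf_lt ⟨1, Set.mem_insert _ _⟩ h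
  obtain rfl | ⟨n, k, -, hu, rfl⟩ := hr
  · exact absurd hrm (not_lt.2 (div_le_one_of_le₀ (one_le_pow₀ one_le_two) (by positivity)))
  · have hkm : k * 2 ^ m < 2 ^ n := by
      rw [div_lt_div_iff₀ (by positivity) (by positivity), one_mul] at hrm
      exact_mod_cast hrm
    rw [← dyadicSet_mul_two_pow U n k m] at hu
    rw [← dyadicSet_two_pow_sub U (Nat.le_add_left m n), Nat.add_sub_cancel]
    exact dyadicSet_mono hzero hsub hgyr hkm.le (Nat.pow_le_pow_right two_pos (by omega)) hu

theorem dyadicGauge_add_le_of_mem (hsub : ∀ n, gadd (U (n + 1)) (U (n + 1)) ⊆ U n)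
    (hgyr : ∀ n x y, gyr x y '' U n = U n) {u z : G} {n q : ℕ} (hq : q ≤ 2 ^ n)
    (hu : u ∈ dyadicSet U n q) (hz : z ∈ U n) : dyadicGauge U (u + z) ≤ (q + 1) / 2 ^ n := by
  rcases hq.lt_or_eq with hq | rfl
  · exact_mod_cast dyadicGauge_le_of_mem hq
      (gadd_dyadicSet_subset hsub hgyr hq (mem_gadd hu hz))
  · refine (dyadicGauge_le_one U _).trans ?_
    rw [le_div_iff₀ (by positivity)]
    push_cast
    linarith

theorem dyadicGauge_add_le (hzero : ∀ n, (0 : G) ∈ U n)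
    (hsub : ∀ n, gadd (U (n + 1)) (U (n + 1)) ⊆ U n) (hgyr : ∀ n x y, gyr x y '' U n = U n)
    (u : G) {z : G} {n : ℕ} (hz : z ∈ U n) :
    dyadicGauge U (u + z) ≤ dyadicGauge U u + 2 / 2 ^ n := by
  rw [← sub_le_iff_le_add]
  refine le_csInf ⟨1, Set.mem_insert _ _⟩ ?_
  rintro r (rfl | ⟨m, k, hk, hu, rfl⟩)
  · linarith [dyadicGauge_le_one U (u + z), show (0 : ℝ) ≤ 2 / 2 ^ n by positivity]
  · obtain ⟨q, hq, huq, hqk⟩ := exists_dyadicSet_coarse hzero hsub hgyr hu hk n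
    have hqk' : (q : ℝ) / 2 ^ n ≤ k / 2 ^ m + 1 / 2 ^ n := by
      rw [div_add_div _ _ (by positivity) (by positivity),
        div_le_div_iff₀ (by positivity) (by positivity)]
      have : (q : ℝ) * 2 ^ m ≤ k * 2 ^ n + 2 ^ m := by exact_mod_cast hqk
      nlinarith [show (0 : ℝ) < 2 ^ n by positivity]
    have := dyadicGauge_add_le_of_mem hsub hgyr hq huq hz
    rw [add_div] at this
    linarith [show (2 : ℝ) / 2 ^ n = 1 / 2 ^ n + 1 / 2 ^ n by ring]

theorem dyadicGauge_le_add (hzero : ∀ n, (0 : G) ∈ U n)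
    (hsub : ∀ n, gadd (U (n + 1)) (U (n + 1)) ⊆ U n) (hgyr : ∀ n x y, gyr x y '' U n = U n)
    (hneg : ∀ n, gneg (U n) = U n) (u : G) {z : G} {n : ℕ} (hz : z ∈ U n) :
    dyadicGauge U u ≤ dyadicGauge U (u + z) + 2 / 2 ^ n := by
  have hz' : gyr u z (-z) ∈ U n := by
    rw [← hgyr n u z, ← hneg n]
    exact ⟨-z, ⟨z, hz, rfl⟩, rfl⟩
  simpa only [Gyrogroup.add_add_gyr_neg] using dyadicGauge_add_le hzero hsub hgyr (u + z) hz'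

def IsLevelMap (U : ℕ → Set G) (Φ : G → G) : Prop :=
  (∀ u v, Φ (u + v) = Φ u + Φ v) ∧ ∀ n, Set.MapsTo Φ (U n) (U n)

theorem isLevelMap_id : IsLevelMap U id :=
  ⟨fun _ _ => rfl, fun n => Set.mapsTo_id (U n)⟩

theorem IsLevelMap.comp {Φ Ψ : G → G} (hΦ : IsLevelMap U Φ) (hΨ : IsLevelMap U Ψ) :
    IsLevelMap U (Φ ∘ Ψ) :=
  ⟨fun u v => by simp only [Function.comp_apply, hΨ.1, hΦ.1],
    fun n => (hΦ.2 n).comp (hΨ.2 n)⟩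

theorem isLevelMap_gyr (hgyr : ∀ n x y, gyr x y '' U n = U n) (a b : G) :
    IsLevelMap U (gyr a b) :=
  ⟨Gyrogroup.gyr_add a b, fun n => Set.mapsTo_iff_image_subset.2 (hgyr n a b).subset⟩

theorem isLevelMap_symm (e : G ≃ G) (he : IsLevelMap U e) (hsurj : ∀ n, U n ⊆ e '' U n) :
    IsLevelMap U e.symm := by
  refine ⟨fun u v => e.injective ?_, fun n u hu => ?_⟩
  · rw [he.1, e.apply_symm_apply, e.apply_symm_apply, e.apply_symm_apply]
  · obtain ⟨w, hw, rfl⟩ := hsurj n hu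
    rwa [e.symm_apply_apply]

noncomputable def gyrEquiv (a b : G) : G ≃ G :=
  Equiv.ofBijective (gyr a b) (Gyrogroup.gyr_bijective a b)

theorem isLevelMap_gyrEquiv_symm (hgyr : ∀ n x y, gyr x y '' U n = U n) (a b : G) :
    IsLevelMap U (gyrEquiv a b).symm :=
  isLevelMap_symm _ (isLevelMap_gyr hgyr a b) fun n => (hgyr n a b).superset

def gaugeVariations (U : ℕ → Set G) (x : G) : Set ℝ :=
  {r | ∃ v Φ, IsLevelMap U Φ ∧ r = |dyadicGauge U (v + Φ x) - dyadicGauge U v|}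

noncomputable def gaugePrenorm (U : ℕ → Set G) (x : G) : ℝ := sSup (gaugeVariations U x)

theorem abs_sub_le_gaugePrenorm {Φ : G → G} (hΦ : IsLevelMap U Φ) (v x : G) :
    |dyadicGauge U (v + Φ x) - dyadicGauge U v| ≤ gaugePrenorm U x := by
  refine le_csSup ⟨1, ?_⟩ ⟨v, Φ, hΦ, rfl⟩
  rintro _ ⟨w, Ψ, -, rfl⟩
  exact abs_sub_le_of_nonneg_of_le (dyadicGauge_nonneg U _) (dyadicGauge_le_one U _)
    (dyadicGauge_nonneg U _) (dyadicGauge_le_one U _)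

theorem gaugePrenorm_le {x : G} {c : ℝ}
    (h : ∀ v Φ, IsLevelMap U Φ → |dyadicGauge U (v + Φ x) - dyadicGauge U v| ≤ c) :
    gaugePrenorm U x ≤ c :=
  csSup_le ⟨_, 0, id, isLevelMap_id, rfl⟩ fun _ ⟨v, Φ, hΦ, hr⟩ => hr ▸ h v Φ hΦ

theorem gaugePrenorm_zero (U : ℕ → Set G) : gaugePrenorm U 0 = 0 := by
  refine le_antisymm (gaugePrenorm_le fun v Φ hΦ => ?_)
    ((abs_nonneg _).trans (abs_sub_le_gaugePrenorm isLevelMap_id 0 0))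
  rw [Gyrogroup.map_zero_of_map_add hΦ.1, Gyrogroup.add_zero, sub_self, abs_zero]

theorem dyadicGauge_le_gaugePrenorm (U : ℕ → Set G) (x : G) :
    dyadicGauge U x ≤ gaugePrenorm U x := by
  simpa [Gyrogroup.zero_add, dyadicGauge_zero, abs_of_nonneg (dyadicGauge_nonneg U x)] using
    abs_sub_le_gaugePrenorm (U := U) isLevelMap_id 0 x

theorem gaugePrenorm_add_le (hgyr : ∀ n x y, gyr x y '' U n = U n) (x y : G) :
    gaugePrenorm U (x + y) ≤ gaugePrenorm U x + gaugePrenorm U y := by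
  refine gaugePrenorm_le fun v Φ hΦ => ?_
  have hΨ : IsLevelMap U (gyr v (Φ x) ∘ Φ) := (isLevelMap_gyr hgyr v (Φ x)).comp hΦ
  have hsplit : v + Φ (x + y) = v + Φ x + (gyr v (Φ x) ∘ Φ) y := by
    rw [hΦ.1, Gyrogroup.add_gyroassoc, Function.comp_apply]
  calc |dyadicGauge U (v + Φ (x + y)) - dyadicGauge U v|
      ≤ |dyadicGauge U (v + Φ (x + y)) - dyadicGauge U (v + Φ x)|
        + |dyadicGauge U (v + Φ x) - dyadicGauge U v| := abs_sub_le _ _ _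
    _ ≤ gaugePrenorm U y + gaugePrenorm U x := by
      rw [hsplit]
      exact add_le_add (abs_sub_le_gaugePrenorm hΨ _ y) (abs_sub_le_gaugePrenorm hΦ v x)
    _ = gaugePrenorm U x + gaugePrenorm U y := add_comm _ _

theorem gaugePrenorm_neg_le (hgyr : ∀ n x y, gyr x y '' U n = U n) (x : G) :
    gaugePrenorm U (-x) ≤ gaugePrenorm U x := by
  refine gaugePrenorm_le fun v Φ hΦ => ?_
  have hΨ : IsLevelMap U (gyr v (-Φ x) ∘ Φ) := (isLevelMap_gyr hgyr v (-Φ x)).comp hΦ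
  have hv : v + -Φ x + (gyr v (-Φ x) ∘ Φ) x = v := by
    simpa only [Function.comp_apply, Gyrogroup.neg_neg] using Gyrogroup.add_add_gyr_neg v (-Φ x)
  rw [Gyrogroup.map_neg_of_map_add hΦ.1, abs_sub_comm]
  simpa only [hv] using abs_sub_le_gaugePrenorm hΨ (v + -Φ x) x

theorem gaugePrenorm_neg (hgyr : ∀ n x y, gyr x y '' U n = U n) (x : G) :
    gaugePrenorm U (-x) = gaugePrenorm U x :=
  (gaugePrenorm_neg_le hgyr x).antisymm <| by
    simpa only [Gyrogroup.neg_neg] using gaugePrenorm_neg_le hgyr (-x)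

theorem gaugePrenorm_gyr (hgyr : ∀ n x y, gyr x y '' U n = U n) (a b z : G) :
    gaugePrenorm U (gyr a b z) = gaugePrenorm U z := by
  refine le_antisymm (gaugePrenorm_le fun v Φ hΦ => ?_) (gaugePrenorm_le fun v Φ hΦ => ?_)
  · exact abs_sub_le_gaugePrenorm (hΦ.comp (isLevelMap_gyr hgyr a b)) v z
  · have h := abs_sub_le_gaugePrenorm (hΦ.comp (isLevelMap_gyrEquiv_symm hgyr a b)) v (gyr a b z)
    rwa [Function.comp_apply, ← Equiv.ofBijective_apply _ (Gyrogroup.gyr_bijective a b),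
      ← gyrEquiv, Equiv.symm_apply_apply] at h

theorem gaugePrenorm_le_of_mem (hzero : ∀ n, (0 : G) ∈ U n)
    (hsub : ∀ n, gadd (U (n + 1)) (U (n + 1)) ⊆ U n) (hgyr : ∀ n x y, gyr x y '' U n = U n)
    (hneg : ∀ n, gneg (U n) = U n) {x : G} {n : ℕ} (hx : x ∈ U n) :
    gaugePrenorm U x ≤ 2 / 2 ^ n := by
  refine gaugePrenorm_le fun v Φ hΦ => abs_sub_le_iff.2 ⟨?_, ?_⟩
  · linarith [dyadicGauge_add_le hzero hsub hgyr v (hΦ.2 n hx)]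
  · linarith [dyadicGauge_le_add hzero hsub hgyr hneg v (hΦ.2 n hx)]

theorem mem_of_gaugePrenorm_lt (hzero : ∀ n, (0 : G) ∈ U n)
    (hsub : ∀ n, gadd (U (n + 1)) (U (n + 1)) ⊆ U n) (hgyr : ∀ n x y, gyr x y '' U n = U n)
    {x : G} {n : ℕ} (hx : gaugePrenorm U x < 1 / 2 ^ n) : x ∈ U n :=
  mem_of_dyadicGauge_lt hzero hsub hgyr ((dyadicGauge_le_gaugePrenorm U x).trans_lt hx)

end BirkhoffKakutani

theorem TopologicalGyrogroup.continuous_of_add_le {G : Type u} [TopologicalSpace G]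
    [Gyrogroup G] [TopologicalGyrogroup G] {N : G → ℝ} (hadd : ∀ x y, N (x + y) ≤ N x + N y)
    (hsmall : ∀ ε > 0, ∀ᶠ y in nhds (0 : G), N y < ε) : Continuous N := by
  refine continuous_iff_continuousAt.2 fun x₀ => Metric.tendsto_nhds.2 fun ε hε => ?_
  have hleft : Filter.Tendsto (fun x => -x₀ + x) (nhds x₀) (nhds 0) := by
    have hc : Continuous fun x : G => -x₀ + x :=
      TopologicalGyrogroup.continuous_add.comp (continuous_const.prodMk continuous_id)
    simpa only [Gyrogroup.neg_add] using hc.tendsto x₀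
  have hright : Filter.Tendsto (fun x => -x + x₀) (nhds x₀) (nhds 0) := by
    have hc : Continuous fun x : G => -x + x₀ := TopologicalGyrogroup.continuous_add.comp
      (TopologicalGyrogroup.continuous_neg.prodMk continuous_const)
    simpa only [Gyrogroup.neg_add] using hc.tendsto x₀
  filter_upwards [hleft.eventually (hsmall ε hε), hright.eventually (hsmall ε hε)]
    with x h₁ h₂
  have hx := hadd x₀ (-x₀ + x)
  have hx₀ := hadd x (-x + x₀)
  rw [Gyrogroup.add_neg_cancel_left] at hx hx₀
  rw [Real.dist_eq, abs_sub_lt_iff]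
  constructor <;> linarith

open BirkhoffKakutani

theorem stmt16_general {G : Type u} [TopologicalSpace G] [Gyrogroup G] [TopologicalGyrogroup G]
    (𝒰 : Set (Set G)) (hnbhd : ∀ U ∈ 𝒰, U ∈ nhds (0 : G))
    (hsym : ∀ U ∈ 𝒰, gneg U = U)
    (hgyr : ∀ U ∈ 𝒰, ∀ x y : G, gyr x y '' U = U)
    (U : ℕ → Set G) (hU : ∀ n, U n ∈ 𝒰)
    (hUsub : ∀ n, gadd (U (n + 1)) (U (n + 1)) ⊆ U n) :
    ∃ N : G → ℝ, Continuous N ∧ N 0 = 0 ∧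
      (∀ x y : G, N (x + y) ≤ N x + N y) ∧ (∀ x : G, N (-x) = N x) ∧
      (∀ x y z : G, N (gyr x y z) = N z) ∧
      (∀ n : ℕ, {x : G | N x < 1 / 2 ^ n} ⊆ U n ∧ U n ⊆ {x : G | N x ≤ 2 / 2 ^ n}) := by
  have hzero n : (0 : G) ∈ U n := mem_of_mem_nhds (hnbhd _ (hU n))
  have hgyrU n : ∀ x y : G, gyr x y '' U n = U n := hgyr _ (hU n)
  have hnegU n : gneg (U n) = U n := hsym _ (hU n)
  have hsmall (ε : ℝ) (hε : 0 < ε) : ∀ᶠ y in nhds (0 : G), gaugePrenorm U y < ε := by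
    obtain ⟨n, hn⟩ := pow_unbounded_of_one_lt (2 / ε) one_lt_two
    have hn' : 2 / 2 ^ n < ε := by
      rw [div_lt_iff₀ hε] at hn
      rwa [div_lt_iff₀ (by positivity), mul_comm]
    filter_upwards [hnbhd _ (hU n)] with y hy
    exact (gaugePrenorm_le_of_mem hzero hUsub hgyrU hnegU hy).trans_lt hn'
  exact ⟨gaugePrenorm U,
    TopologicalGyrogroup.continuous_of_add_le (gaugePrenorm_add_le hgyrU) hsmall,
    gaugePrenorm_zero U, gaugePrenorm_add_le hgyrU, gaugePrenorm_neg hgyrU,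
    gaugePrenorm_gyr hgyrU, fun n => ⟨fun _ => mem_of_gaugePrenorm_lt hzero hUsub hgyrU,
      fun _ => gaugePrenorm_le_of_mem hzero hUsub hgyrU hnegU⟩⟩

theorem stmt16 {G : Type u} [TopologicalSpace G] [Gyrogroup G] [TopologicalGyrogroup G]
    (𝒰 : Set (Set G)) (hnbhd : ∀ U ∈ 𝒰, U ∈ nhds (0 : G))
    (hbase : ∀ W ∈ nhds (0 : G), ∃ U ∈ 𝒰, U ⊆ W)
    (hsym : ∀ U ∈ 𝒰, gneg U = U)
    (hgyr : ∀ U ∈ 𝒰, ∀ x y : G, gyr x y '' U = U)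
    (U : ℕ → Set G) (hU : ∀ n, U n ∈ 𝒰)
    (hUsub : ∀ n, gadd (U (n + 1)) (U (n + 1)) ⊆ U n) :
    ∃ N : G → ℝ, Continuous N ∧ N 0 = 0 ∧
      (∀ x y : G, N (x + y) ≤ N x + N y) ∧ (∀ x : G, N (-x) = N x) ∧
      (∀ x y z : G, N (gyr x y z) = N z) ∧
      (∀ n : ℕ, {x : G | N x < 1 / 2 ^ n} ⊆ U n ∧ U n ⊆ {x : G | N x ≤ 2 / 2 ^ n}) :=
  stmt16_general 𝒰 hnbhd hsym hgyr U hU hUsub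
end

section
/- Let (G, τ, ⊕) be a topological gyrogroup and F a non-empty compact G_δ-set in G. Then there exists a closed subgyrogroup P of G such that P is a G_δ-set in G, 0 ∈ P, and F ⊕ P ⊆ F. -/
universe u

open Gyrogroup

section Aux

variable {G : Type u} [TopologicalSpace G] [Gyrogroup G] [TopologicalGyrogroup G]

lemma gyro_neg_zero {G : Type u} [Gyrogroup G] : (-0 : G) = 0 :=
  (Gyrogroup.neg_unique (0 : G) 0 ⟨Gyrogroup.zero_add 0, Gyrogroup.zero_add 0⟩).symm

lemma gyro_neg_neg {G : Type u} [Gyrogroup G] (a : G) : -(-a) = a :=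
  (Gyrogroup.neg_unique (-a) a ⟨Gyrogroup.add_neg a, Gyrogroup.neg_add a⟩).symm

/-- Step lemma: given an open neighborhood `V` of 0 and an open `U ⊇ F` with `F` compact,
produce a smaller symmetric neighborhood `W`. -/
lemma gyro_step [RegularSpace G] {F : Set G} (hc : IsCompact F)
    (V : Set G) (hVo : IsOpen V) (hV0 : (0 : G) ∈ V)
    (U : Set G) (hUo : IsOpen U) (hFU : F ⊆ U) :
    ∃ W : Set G, IsOpen W ∧ (0 : G) ∈ W ∧ gneg W ⊆ W ∧ gadd W W ⊆ V ∧
      closure W ⊆ V ∧ gadd F W ⊆ U := by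
  classical
  have hcont : Continuous fun p : G × G => p.1 + p.2 := TopologicalGyrogroup.continuous_add
  have hneg : Continuous fun x : G => -x := TopologicalGyrogroup.continuous_neg
  -- compact part: find open `Va ∋ 0` with `F ⊕ Va ⊆ U`
  have hA : ∀ f ∈ F, ∃ AB : Set G × Set G, IsOpen AB.1 ∧ IsOpen AB.2 ∧ f ∈ AB.1 ∧
      (0 : G) ∈ AB.2 ∧ ∀ a ∈ AB.1, ∀ b ∈ AB.2, a + b ∈ U := by
    intro f hf
    have hmem : (f, (0 : G)) ∈ (fun p : G × G => p.1 + p.2) ⁻¹' U := by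
      simp only [Set.mem_preimage, Gyrogroup.add_zero f]; exact hFU hf
    have hop : IsOpen ((fun p : G × G => p.1 + p.2) ⁻¹' U) := hUo.preimage hcont
    rcases isOpen_prod_iff.1 hop f 0 hmem with ⟨A, B, hAo, hBo, hfA, h0B, hAB⟩
    exact ⟨(A, B), hAo, hBo, hfA, h0B, fun a ha b hb => hAB (Set.mk_mem_prod ha hb)⟩
  choose! AB hAo hBo hfA h0B hAB using hA
  obtain ⟨t, htF, htfin, htcov⟩ := hc.elim_finite_subcover_image
    (fun f hf => hAo f hf) (fun x hx => Set.mem_biUnion hx (hfA x hx))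
  obtain ⟨Va, hVao, hVa0, hVaU⟩ :
      ∃ Va : Set G, IsOpen Va ∧ (0 : G) ∈ Va ∧ ∀ f ∈ F, ∀ v ∈ Va, f + v ∈ U := by
    refine ⟨⋂ f ∈ t, (AB f).2, htfin.isOpen_biInter (fun f hf => hBo f (htF hf)), ?_, ?_⟩
    · exact Set.mem_biInter fun f hf => h0B f (htF hf)
    · intro f hf v hv
      rcases Set.mem_iUnion₂.1 (htcov hf) with ⟨g, hg, hfg⟩
      exact hAB g (htF hg) f hfg v (Set.biInter_subset_of_mem hg hv)
  -- shrink: `W₁ ⊕ W₁ ⊆ V ∩ Va`, `cl W₂ ⊆ V ∩ Va`, then symmetrize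
  have hVVa : IsOpen (V ∩ Va) := hVo.inter hVao
  have h0VVa : (0 : G) ∈ V ∩ Va := ⟨hV0, hVa0⟩
  have hmem00 : ((0 : G), (0 : G)) ∈ (fun p : G × G => p.1 + p.2) ⁻¹' (V ∩ Va) := by
    simp only [Set.mem_preimage, Gyrogroup.add_zero]; exact h0VVa
  rcases isOpen_prod_iff.1 (hVVa.preimage hcont) 0 0 hmem00 with
    ⟨A1, B1, hA1o, hB1o, h0A1, h0B1, hA1B1⟩
  set W1 : Set G := A1 ∩ B1 with hW1
  rcases exists_mem_nhds_isClosed_subset (hVVa.mem_nhds h0VVa) with ⟨C, hCn, hCcl, hCsub⟩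
  set W2 : Set G := interior C with hW2
  have h0W2 : (0 : G) ∈ W2 := mem_interior_iff_mem_nhds.2 hCn
  set W0 : Set G := W1 ∩ W2 with hW0def
  set W : Set G := W0 ∩ (fun x : G => -x) ⁻¹' W0 with hWdef
  have hWsub : W ⊆ W0 := Set.inter_subset_left
  refine ⟨W, ?_, ?_, ?_, ?_, ?_, ?_⟩
  · exact ((hA1o.inter hB1o).inter isOpen_interior).inter
      (((hA1o.inter hB1o).inter isOpen_interior).preimage hneg)
  · refine ⟨⟨⟨h0A1, h0B1⟩, h0W2⟩, ?_⟩
    simp only [Set.mem_preimage, gyro_neg_zero]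
    exact ⟨⟨h0A1, h0B1⟩, h0W2⟩
  · rintro x ⟨y, hy, rfl⟩
    exact ⟨hy.2, by simpa only [Set.mem_preimage, gyro_neg_neg] using hy.1⟩
  · rintro x ⟨a, ha, b, hb, rfl⟩
    exact (hA1B1 (Set.mk_mem_prod (hWsub ha).1.1 (hWsub hb).1.2)).1
  · intro x hx
    have : x ∈ closure W2 := closure_mono (fun y hy => (hWsub hy).2) hx
    have : x ∈ C := by
      have := closure_mono (interior_subset : W2 ⊆ C) this
      rwa [hCcl.closure_eq] at this
    exact (hCsub this).1
  · rintro x ⟨f, hf, w, hw, rfl⟩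
    have hwVa : w ∈ Va := by
      have := hA1B1 (Set.mk_mem_prod (hWsub hw).1.1 h0B1)
      simpa only [Set.mem_preimage, Gyrogroup.add_zero] using this.2
    exact hVaU f hf w hwVa

end Aux

theorem stmt17 {G : Type u} [TopologicalSpace G] [Gyrogroup G] [TopologicalGyrogroup G]
    [T1Space G] [RegularSpace G]
    (F : Set G) (hne : F.Nonempty) (hc : IsCompact F) (hGd : IsGδ F) :
    ∃ P : Set G, IsClosed P ∧ IsSubgyrogroup P ∧ IsGδ P ∧ (0 : G) ∈ P ∧ gadd F P ⊆ F := by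
  classical
  obtain ⟨U, hUo, hFU⟩ := hGd.eq_iInter_nat
  have hFsub : ∀ n, F ⊆ U n := fun n => hFU ▸ Set.iInter_subset U n
  -- recursive construction
  have hstep : ∀ (V : Set G), IsOpen V → (0 : G) ∈ V → ∀ n : ℕ,
      ∃ W : Set G, IsOpen W ∧ (0 : G) ∈ W ∧ gneg W ⊆ W ∧ gadd W W ⊆ V ∧
        closure W ⊆ V ∧ gadd F W ⊆ U n := fun V hVo hV0 n =>
    gyro_step hc V hVo hV0 (U n) (hUo n) (hFsub n)
  let S := {W : Set G // IsOpen W ∧ (0 : G) ∈ W}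
  let base : S := ⟨(hstep Set.univ isOpen_univ trivial 0).choose,
    (hstep Set.univ isOpen_univ trivial 0).choose_spec.1,
    (hstep Set.univ isOpen_univ trivial 0).choose_spec.2.1⟩
  let next : ℕ → S → S := fun n p =>
    ⟨(hstep p.1 p.2.1 p.2.2 (n + 1)).choose,
     (hstep p.1 p.2.1 p.2.2 (n + 1)).choose_spec.1,
     (hstep p.1 p.2.1 p.2.2 (n + 1)).choose_spec.2.1⟩
  let f : ℕ → S := fun n => Nat.rec base next n
  set V : ℕ → Set G := fun n => (f n).1 with hV
  have hfsucc : ∀ n, f (n + 1) = next n (f n) := fun n => rfl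
  have hVo' : ∀ n, IsOpen (V n) := fun n => (f n).2.1
  have hV0 : ∀ n, (0 : G) ∈ V n := fun n => (f n).2.2
  have hbase := (hstep Set.univ isOpen_univ trivial 0).choose_spec
  have hsucc : ∀ n, gneg (V (n + 1)) ⊆ V (n + 1) ∧ gadd (V (n + 1)) (V (n + 1)) ⊆ V n ∧
      closure (V (n + 1)) ⊆ V n ∧ gadd F (V (n + 1)) ⊆ U (n + 1) := fun n =>
    ⟨(hstep (f n).1 (f n).2.1 (f n).2.2 (n + 1)).choose_spec.2.2.1,
     (hstep (f n).1 (f n).2.1 (f n).2.2 (n + 1)).choose_spec.2.2.2.1,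
     (hstep (f n).1 (f n).2.1 (f n).2.2 (n + 1)).choose_spec.2.2.2.2.1,
     (hstep (f n).1 (f n).2.1 (f n).2.2 (n + 1)).choose_spec.2.2.2.2.2⟩
  have hFV : ∀ n, gadd F (V n) ⊆ U n := by
    intro n
    cases n with
    | zero => exact hbase.2.2.2.2.2
    | succ n => exact (hsucc n).2.2.2
  have hnegV : ∀ n, gneg (V n) ⊆ V n := by
    intro n
    cases n with
    | zero => exact hbase.2.2.1
    | succ n => exact (hsucc n).1
  refine ⟨⋂ n, V n, ?_, ?_, ?_, ?_, ?_⟩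
  · -- closed
    have heq : ⋂ n, V n = ⋂ n, closure (V (n + 1)) := by
      apply Set.Subset.antisymm
      · exact Set.subset_iInter fun n =>
          (Set.iInter_subset V (n + 1)).trans subset_closure
      · exact Set.subset_iInter fun n => (Set.iInter_subset _ n).trans (hsucc n).2.2.1
    rw [heq]
    exact isClosed_iInter fun n => isClosed_closure
  · refine ⟨⟨0, Set.mem_iInter.2 hV0⟩, ?_, ?_⟩
    · intro x hx
      refine Set.mem_iInter.2 fun n => hnegV n ⟨x, Set.mem_iInter.1 hx n, rfl⟩
    · intro x hx y hy
      refine Set.mem_iInter.2 fun n => (hsucc n).2.1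
        ⟨x, Set.mem_iInter.1 hx (n + 1), y, Set.mem_iInter.1 hy (n + 1), rfl⟩
  · exact .iInter_of_isOpen hVo'
  · exact Set.mem_iInter.2 hV0
  · rintro x ⟨a, ha, p, hp, rfl⟩
    rw [hFU]
    exact Set.mem_iInter.2 fun n => hFV n ⟨a, ha, p, Set.mem_iInter.1 hp n, rfl⟩
end

section
/- Let (G, τ, ⊕) be a topological gyrogroup that is an NSS-gyrogroup (there is a neighborhood V of 0 such that every subgyrogroup contained in V is trivial). If G contains a non-empty compact G_δ-set, then the identity element 0 is a G_δ-point in G. -/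
universe u

open Gyrogroup

theorem stmt19 {G : Type u} [TopologicalSpace G] [Gyrogroup G] [TopologicalGyrogroup G]
    [T1Space G] [RegularSpace G]
    (hNSS : ∃ V ∈ nhds (0 : G), ∀ H : Set G, IsSubgyrogroup H → H ⊆ V → H = {0})
    (hF : ∃ F : Set G, F.Nonempty ∧ IsCompact F ∧ IsGδ F) :
    IsGδ {(0 : G)} := by
  classical
  obtain ⟨V, hV, hsub⟩ := hNSS
  -- shrink V to an open set V0 containing 0
  obtain ⟨V0, hV0V, hV0open, hV00⟩ := mem_nhds_iff.mp hV
  -- key step lemma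
  have key : ∀ S : Set G, IsOpen S ∧ (0 : G) ∈ S →
      ∃ T : Set G, (IsOpen T ∧ (0 : G) ∈ T) ∧
        (∀ x ∈ T, ∀ y ∈ T, x + y ∈ S) ∧ (∀ x ∈ T, -x ∈ S) := by
    rintro S ⟨hSopen, hS0⟩
    have hadd : ContinuousAt (fun p : G × G => p.1 + p.2) ((0 : G), (0 : G)) :=
      TopologicalGyrogroup.continuous_add.continuousAt
    have h00 : (fun p : G × G => p.1 + p.2) ((0 : G), (0 : G)) = 0 := Gyrogroup.zero_add 0
    have hmem : (fun p : G × G => p.1 + p.2) ⁻¹' S ∈ nhds ((0 : G), (0 : G)) := by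
      apply hadd
      rw [h00]
      exact hSopen.mem_nhds hS0
    rw [nhds_prod_eq, Filter.mem_prod_iff] at hmem
    obtain ⟨A, hA, B, hB, hAB⟩ := hmem
    have hneg : ContinuousAt (fun x : G => -x) (0 : G) :=
      TopologicalGyrogroup.continuous_neg.continuousAt
    have hneg0 : -(0 : G) = 0 := by
      have := Gyrogroup.neg_unique (0 : G) 0 ⟨Gyrogroup.zero_add 0, Gyrogroup.zero_add 0⟩
      exact this.symm
    have hCmem : (fun x : G => -x) ⁻¹' S ∈ nhds (0 : G) := by
      apply hneg
      show S ∈ nhds (-(0:G))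
      rw [hneg0]
      exact hSopen.mem_nhds hS0
    obtain ⟨A', hA'sub, hA'open, hA'0⟩ := mem_nhds_iff.mp hA
    obtain ⟨B', hB'sub, hB'open, hB'0⟩ := mem_nhds_iff.mp hB
    obtain ⟨C', hC'sub, hC'open, hC'0⟩ := mem_nhds_iff.mp hCmem
    refine ⟨A' ∩ B' ∩ C', ⟨(hA'open.inter hB'open).inter hC'open, ⟨⟨hA'0, hB'0⟩, hC'0⟩⟩,
      ?_, ?_⟩
    · intro x hx y hy
      exact hAB (show (x, y) ∈ A ×ˢ B from ⟨hA'sub hx.1.1, hB'sub hy.1.2⟩)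
    · intro x hx
      exact hC'sub hx.2
  choose step hstepP hstepAdd hstepNeg using key
  -- recursive sequence of open neighborhoods
  let U : ℕ → {S : Set G // IsOpen S ∧ (0 : G) ∈ S} := fun n =>
    Nat.rec ⟨V0, hV0open, hV00⟩ (fun _ p => ⟨step p.1 p.2, hstepP p.1 p.2⟩) n
  have hUsucc : ∀ n, (U (n + 1)).1 = step (U n).1 (U n).2 := fun _ => rfl
  set N : Set G := ⋂ n, (U n).1 with hN
  have hN0 : (0 : G) ∈ N := Set.mem_iInter.mpr fun n => (U n).2.2
  have hNsub : IsSubgyrogroup N := by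
    refine ⟨⟨0, hN0⟩, ?_, ?_⟩
    · intro x hx
      refine Set.mem_iInter.mpr fun n => ?_
      have hx' : x ∈ (U (n + 1)).1 := Set.mem_iInter.mp hx (n + 1)
      rw [hUsucc] at hx'
      exact hstepNeg (U n).1 (U n).2 x hx'
    · intro x hx y hy
      refine Set.mem_iInter.mpr fun n => ?_
      have hx' : x ∈ (U (n + 1)).1 := Set.mem_iInter.mp hx (n + 1)
      have hy' : y ∈ (U (n + 1)).1 := Set.mem_iInter.mp hy (n + 1)
      rw [hUsucc] at hx' hy'
      exact hstepAdd (U n).1 (U n).2 x hx' y hy'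
  have hNV : N ⊆ V := fun x hx => hV0V (Set.mem_iInter.mp hx 0)
  have hNeq : N = {(0 : G)} := hsub N hNsub hNV
  rw [← hNeq, hN]
  exact IsGδ.iInter fun n => (U n).2.1.isGδ
end
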